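/- Let p be an odd prime and let G = ⟨{a} ∪ {b^(j)_i : 1 ≤ j ≤ p, 1 ≤ i ≤ r_j}⟩ be a generalised multi-edge spinal group in standard form. Then the abelianisation G/G' is elementary abelian of order p^{1+r₁+⋯+r_p}. More precisely, there is a well-defined surjective homomorphism G → (Z/pZ) × ∏_{j=1}^p (Z/pZ)^{r_j} sending a to (1, 0) and each b^(j)_i to the element whose only non-zero coordinate is a 1 in the (j,i)-th position, and its kernel is exactly the derived subgroup G'. -/

import Mathlib

namespace GMS

abbrev Vtx (p : ℕ) := List (Fin p)

def applyP {p : ℕ} : (Vtx p → Equiv.Perm (Fin p)) → Vtx p → Vtx p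
  | _, [] => []
  | f, x :: ω => f [] x :: applyP (fun τ => f (x :: τ)) ω

def invApplyP {p : ℕ} : (Vtx p → Equiv.Perm (Fin p)) → Vtx p → Vtx p
  | _, [] => []
  | f, y :: ω => (f []).symm y :: invApplyP (fun τ => f ((f []).symm y :: τ)) ω

theorem applyP_invApplyP {p : ℕ} (f : Vtx p → Equiv.Perm (Fin p)) (ω : Vtx p) :
    applyP f (invApplyP f ω) = ω := by
  induction ω generalizing f with
  | nil => rfl
  | cons y ω ih => simp [applyP, invApplyP, ih]

theorem invApplyP_applyP {p : ℕ} (f : Vtx p → Equiv.Perm (Fin p)) (ω : Vtx p) :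
    invApplyP f (applyP f ω) = ω := by
  induction ω generalizing f with
  | nil => rfl
  | cons x ω ih => simp [applyP, invApplyP, ih]

def toPerm {p : ℕ} (f : Vtx p → Equiv.Perm (Fin p)) : Equiv.Perm (Vtx p) :=
  ⟨applyP f, invApplyP f, invApplyP_applyP f, applyP_invApplyP f⟩

def treeAut (p : ℕ) : Subgroup (Equiv.Perm (Vtx p)) where
  carrier := {f | ∀ ω ω' : Vtx p, ω <+: ω' → f ω <+: f ω' ∧ f.symm ω <+: f.symm ω'}
  one_mem' := fun _ _ h => ⟨h, h⟩
  mul_mem' := by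
    intro f g hf hg ω ω' h
    exact ⟨(hf _ _ (hg _ _ h).1).1, (hg _ _ (hf _ _ h).2).2⟩
  inv_mem' := by
    intro f hf ω ω' h
    exact ⟨(hf _ _ h).2, (hf _ _ h).1⟩

theorem applyP_append {p : ℕ} (f : Vtx p → Equiv.Perm (Fin p)) (ω t : Vtx p) :
    applyP f (ω ++ t) = applyP f ω ++ applyP (fun τ => f (ω ++ τ)) t := by
  induction ω generalizing f with
  | nil => rfl
  | cons x ω ih => simp [applyP, ih]

theorem invApplyP_append {p : ℕ} (f : Vtx p → Equiv.Perm (Fin p)) (ω t : Vtx p) :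
    invApplyP f (ω ++ t) =
      invApplyP f ω ++ invApplyP (fun τ => f (invApplyP f ω ++ τ)) t := by
  induction ω generalizing f with
  | nil => rfl
  | cons x ω ih => simp [invApplyP, ih]

theorem toPerm_mem_treeAut {p : ℕ} (f : Vtx p → Equiv.Perm (Fin p)) :
    toPerm f ∈ treeAut p := by
  intro ω ω' h
  obtain ⟨t, rfl⟩ := h
  exact ⟨⟨_, (applyP_append f ω t).symm⟩, ⟨_, (invApplyP_append f ω t).symm⟩⟩

/-- The `p`-cycle `x ↦ x + 1` on `Fin p`. -/
def rootCycle (p : ℕ) [NeZero p] : Equiv.Perm (Fin p) := Equiv.addRight 1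

/-- The rooted automorphism `a`, cyclically permuting the first-level subtrees. -/
def aAut (p : ℕ) [NeZero p] : Equiv.Perm (Vtx p) :=
  toPerm (fun ω => if ω = [] then rootCycle p else 1)

/-- Conversion of a non-zero residue position to an index in `Fin (p-1)`. -/
def offIdx {p : ℕ} (hp1 : 1 < p) (k : Fin p) : Fin (p - 1) :=
  ⟨k.val - 1, by have := k.isLt; omega⟩

/-- The portrait of a directed automorphism with directing path `c, cc, ccc, …` and
defining vector `e`: its section at the first-level vertex `c` is itself, and its
section at a first-level vertex `c + k` (for `k ≠ 0`) is `a^{e_k}`. -/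
def dirPort {p : ℕ} [NeZero p] (hp1 : 1 < p) (c : Fin p) (e : Fin (p - 1) → ZMod p) :
    Vtx p → Equiv.Perm (Fin p)
  | [] => 1
  | [x] => if x = c then 1 else rootCycle p ^ (e (offIdx hp1 (x - c))).val
  | x :: y :: ω => if x = c then dirPort hp1 c e (y :: ω) else 1

/-- The directed automorphism with directing path `c, cc, ccc, …` and defining
vector `e`; it satisfies `ψ₁(b) = (…, a^{e_k} at position c + k, …, b at position c, …)`. -/
def dirAut {p : ℕ} [NeZero p] (hp1 : 1 < p) (c : Fin p) (e : Fin (p - 1) → ZMod p) :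
    Equiv.Perm (Vtx p) :=
  toPerm (dirPort hp1 c e)

/-- Defining data for a generalised multi-edge spinal group in standard form:
for each `j`, an `r j`-tuple of linearly independent defining vectors in `(ℤ/pℤ)^{p-1}`. -/
structure SpinalData (p : ℕ) where
  r : Fin p → ℕ
  r_le : ∀ j, r j ≤ p - 1
  r_ne : ∃ j, r j ≠ 0
  e : (j : Fin p) → Fin (r j) → Fin (p - 1) → ZMod p
  indep : ∀ j, LinearIndependent (ZMod p) (e j)

/-- The directing-path letter of the `j`-th family (`j` is 0-indexed; the paper's
family `j+1` is directed along the constant path with letter `p - j - 1`). -/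
def pathLetter {p : ℕ} [NeZero p] (j : Fin p) : Fin p := -(j + 1)

/-- The directed generator `b^{(j)}_i`. -/
def SpinalData.gen {p : ℕ} [NeZero p] (D : SpinalData p) (hp1 : 1 < p)
    (j : Fin p) (i : Fin (D.r j)) : Equiv.Perm (Vtx p) :=
  dirAut hp1 (pathLetter j) (D.e j i)

/-- The generating set `{a} ∪ {b^{(j)}_i}`. -/
def SpinalData.genSet {p : ℕ} [NeZero p] (D : SpinalData p) (hp1 : 1 < p) :
    Set (Equiv.Perm (Vtx p)) :=
  insert (aAut p) {g | ∃ j i, g = D.gen hp1 j i}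

/-- The generalised multi-edge spinal group in standard form associated to `D`. -/
def SpinalData.grp {p : ℕ} [NeZero p] (D : SpinalData p) (hp1 : 1 < p) :
    Subgroup (Equiv.Perm (Vtx p)) :=
  Subgroup.closure (D.genSet hp1)

theorem aAut_mem_grp {p : ℕ} [NeZero p] (D : SpinalData p) (hp1 : 1 < p) :
    aAut p ∈ D.grp hp1 :=
  Subgroup.subset_closure (Set.mem_insert _ _)

theorem gen_mem_grp {p : ℕ} [NeZero p] (D : SpinalData p) (hp1 : 1 < p)
    (j : Fin p) (i : Fin (D.r j)) : D.gen hp1 j i ∈ D.grp hp1 :=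
  Subgroup.subset_closure (Set.mem_insert_iff.mpr (Or.inr ⟨j, i, rfl⟩))

/-- `ψ₁(g) = (s 0, …, s (p-1))`: the element `g` stabilises the first level and has
section `s x` at the first-level vertex `x`. -/
def hasSections {p : ℕ} (g : Equiv.Perm (Vtx p)) (s : Fin p → Equiv.Perm (Vtx p)) : Prop :=
  ∀ (x : Fin p) (τ : Vtx p), g (x :: τ) = x :: s x τ

/-- `g` fixes the vertex `u` and acts on the subtree rooted at `u` as `s` (under the
natural identification of the subtree with the whole tree). -/
def sectionAt {p : ℕ} (u : Vtx p) (g s : Equiv.Perm (Vtx p)) : Prop :=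
  ∀ τ : Vtx p, g (u ++ τ) = u ++ s τ

/-- The pointwise stabiliser of the `n`-th level of the tree. -/
def levelStab (p : ℕ) (n : ℕ) : Subgroup (Equiv.Perm (Vtx p)) where
  carrier := {g | ∀ ω : Vtx p, ω.length = n → g ω = ω}
  one_mem' := fun _ _ => rfl
  mul_mem' := by
    intro f g hf hg ω hω
    have := hg ω hω
    simp only [Equiv.Perm.mul_apply, this]
    exact hf ω hω
  inv_mem' := by
    intro f hf ω hω
    have := hf ω hω
    calc f⁻¹ ω = f⁻¹ (f ω) := by rw [this]
    _ = ω := f.symm_apply_apply ω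

/-- Spherical transitivity: `G` acts transitively on every level of the tree. -/
def SphericallyTransitive (p : ℕ) (G : Subgroup (Equiv.Perm (Vtx p))) : Prop :=
  ∀ ω ω' : Vtx p, ω.length = ω'.length → ∃ g ∈ G, g ω = ω'

/-- `G` is fractal: it is spherically transitive and for every vertex `u`, the
restriction to the subtree rooted at `u` of the stabiliser of `u` in `G` is `G` itself. -/
def Fractal (p : ℕ) (G : Subgroup (Equiv.Perm (Vtx p))) : Prop :=
  SphericallyTransitive p G ∧
    ∀ (u : Vtx p) (s : Equiv.Perm (Vtx p)), s ∈ G ↔ ∃ g ∈ G, sectionAt u g s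

/-- `G` is regular branch over `K`: `G` is fractal, `K` is a non-trivial subgroup of
`Stab_G(1)` of finite index in `G`, and `K × ⋯ × K ⊆ ψ₁(K)`. -/
def RegularBranch (p : ℕ) (G K : Subgroup (Equiv.Perm (Vtx p))) : Prop :=
  Fractal p G ∧ K ≠ ⊥ ∧ K ≤ G ⊓ levelStab p 1 ∧ K.relIndex G ≠ 0 ∧
    ∀ s : Fin p → Equiv.Perm (Vtx p), (∀ x, s x ∈ K) → ∃ g ∈ K, hasSections g s

/-- The third term `γ₃(H) = [[H,H],H]` of the lower central series. -/
def gamma3 {Γ : Type*} [Group Γ] (H : Subgroup Γ) : Subgroup Γ := ⁅(⁅H, H⁆ : Subgroup Γ), H⁆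

/-- Rigid stabiliser (in the full permutation group) of the vertex `u`: permutations
fixing every vertex not having `u` as a prefix. -/
def rigidStab (p : ℕ) (u : Vtx p) : Subgroup (Equiv.Perm (Vtx p)) where
  carrier := {g | ∀ ω : Vtx p, ¬ u <+: ω → g ω = ω}
  one_mem' := fun _ _ => rfl
  mul_mem' := by
    intro f g hf hg ω hω
    have := hg ω hω
    simp only [Equiv.Perm.mul_apply, this]
    exact hf ω hω
  inv_mem' := by
    intro f hf ω hω
    have := hf ω hω
    calc f⁻¹ ω = f⁻¹ (f ω) := by rw [this]
    _ = ω := f.symm_apply_apply ω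

/-- The rigid `n`-th level stabiliser of `G`: the subgroup generated by (equivalently,
the product of) the rigid vertex stabilisers of the vertices at level `n`. -/
def rigidLevelStab (p : ℕ) (G : Subgroup (Equiv.Perm (Vtx p))) (n : ℕ) :
    Subgroup (Equiv.Perm (Vtx p)) :=
  ⨆ u ∈ {u : Vtx p | u.length = n}, (G ⊓ rigidStab p u)

/-- `G` is a branch group (with respect to its action on the regular rooted tree). -/
def Branch (p : ℕ) (G : Subgroup (Equiv.Perm (Vtx p))) : Prop :=
  SphericallyTransitive p G ∧ ∀ n : ℕ, (rigidLevelStab p G n).relIndex G ≠ 0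

/-- An infinite group all of whose proper quotients are finite. -/
def JustInfinite {Γ : Type*} [Group Γ] (G : Subgroup Γ) : Prop :=
  (G : Set Γ).Infinite ∧
    ∀ N : Subgroup ↥G, N.Normal → N ≠ ⊥ → N.FiniteIndex

/-- The conjugate subgroup `x H x⁻¹`. -/
def conjSub {Γ : Type*} [Group Γ] (x : Γ) (H : Subgroup Γ) : Subgroup Γ :=
  H.map (MulAut.conj x).toMonoidHom

/-- `M` is a dense subgroup of `G` with respect to the profinite topology on `G`:
`NM = G` for every normal subgroup `N` of `G` of finite index. -/
def DenseIn {Γ : Type*} [Group Γ] (M G : Subgroup Γ) : Prop :=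
  M ≤ G ∧ ∀ N : Subgroup Γ, N ≤ G → (N.subgroupOf G).Normal → N.relIndex G ≠ 0 →
    G ≤ N ⊔ M

/-- The restriction to the subtree rooted at `u` of the stabiliser of `u` in `M`
(the "upper companion" subgroup `M_u`), under the identification of the subtree with
the whole tree. -/
def restrAt (p : ℕ) (u : Vtx p) (M : Subgroup (Equiv.Perm (Vtx p))) :
    Subgroup (Equiv.Perm (Vtx p)) where
  carrier := {s | ∃ g ∈ M, sectionAt u g s}
  one_mem' := ⟨1, M.one_mem, fun τ => rfl⟩
  mul_mem' := by
    rintro s s' ⟨g, hg, hgs⟩ ⟨g', hg', hgs'⟩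
    refine ⟨g * g', M.mul_mem hg hg', fun τ => ?_⟩
    simp only [Equiv.Perm.mul_apply, hgs' τ, hgs (s' τ)]
  inv_mem' := by
    rintro s ⟨g, hg, hgs⟩
    refine ⟨g⁻¹, M.inv_mem hg, fun τ => ?_⟩
    have h1 : g (u ++ s⁻¹ τ) = u ++ τ := by
      rw [hgs (s⁻¹ τ)]
      simp
    calc g⁻¹ (u ++ τ) = g⁻¹ (g (u ++ s⁻¹ τ)) := by rw [h1]
    _ = u ++ s⁻¹ τ := g.symm_apply_apply _

/-- Index `p - i` (`0`-indexed version of `i ↦ p - i` on `{1, …, p-1}`). -/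
def revIdx {p : ℕ} (k : Fin (p - 1)) : Fin (p - 1) :=
  ⟨p - 2 - k.val, by have := k.isLt; omega⟩


/-- Non-constancy of a defining vector. -/
def IsNonConstant {p : ℕ} (v : Fin (p - 1) → ZMod p) : Prop :=
  ¬ ∃ α : ZMod p, ∀ k, v k = α

/-- The regularity condition defining the subclass `𝒞_reg`: every non-empty family
of defining vectors contains a non-constant vector. -/
def SpinalData.IsReg {p : ℕ} (D : SpinalData p) : Prop :=
  ∀ j, D.r j ≠ 0 → ∃ i, IsNonConstant (D.e j i)

/-- Non-symmetry of a defining vector: `e_i ≠ e_{p-i}` for some `i`. -/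
def IsNonSymmetric {p : ℕ} (v : Fin (p - 1) → ZMod p) : Prop :=
  ∃ k, v k ≠ v (revIdx k)

/-- Membership in the class `𝒞`: subgroups of `Aut(T)` conjugate to a generalised
multi-edge spinal group in standard form. -/
def inC (p : ℕ) [NeZero p] (hp1 : 1 < p) (G : Subgroup (Equiv.Perm (Vtx p))) : Prop :=
  ∃ (D : SpinalData p) (x : Equiv.Perm (Vtx p)), x ∈ treeAut p ∧
    G = (D.grp hp1).map (MulAut.conj x).toMonoidHom

/-- Membership in the subclass `𝒞_reg`. -/
def inCreg (p : ℕ) [NeZero p] (hp1 : 1 < p) (G : Subgroup (Equiv.Perm (Vtx p))) : Prop :=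
  ∃ (D : SpinalData p) (x : Equiv.Perm (Vtx p)), x ∈ treeAut p ∧ D.IsReg ∧
    G = (D.grp hp1).map (MulAut.conj x).toMonoidHom

/-- The subgroup `⟨b^{(j)}_1, …, b^{(j)}_{r_j}⟩` generated by the `j`-th family of
directed generators. -/
def SpinalData.bFam {p : ℕ} [NeZero p] (D : SpinalData p) (hp1 : 1 < p) (j : Fin p) :
    Subgroup (Equiv.Perm (Vtx p)) :=
  Subgroup.closure (Set.range (D.gen hp1 j))

/-- `g` can be written as an alternating product
`c₀ d₀ c₁ d₁ ⋯ c_{N-1} d_{N-1} c_N` with each `cₖ` a power of `a` and each `dₖ` an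
element of one of the groups `⟨𝐛^{(j)}⟩`; the number of directed syllables is `N`. -/
def lenWitness {p : ℕ} [NeZero p] (D : SpinalData p) (hp1 : 1 < p)
    (g : Equiv.Perm (Vtx p)) (N : ℕ) : Prop :=
  ∃ (c : Fin (N + 1) → Equiv.Perm (Vtx p)) (d : Fin N → Equiv.Perm (Vtx p)),
    (∀ k, c k ∈ Subgroup.zpowers (aAut p)) ∧
    (∀ k, ∃ j, d k ∈ D.bFam hp1 j) ∧
    g = (List.ofFn fun k : Fin N => c k.castSucc * d k).prod * c (Fin.last N)

/-- The length `∂(g)`: the minimal number of directed syllables needed to express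
`g`; this coincides with the minimum over all preimages of `g` in the free product
`⟨â⟩ * ⟨𝐛̂^{(1)}⟩ * ⋯ * ⟨𝐛̂^{(p)}⟩` of the number of syllables of the normal form
lying in the directed factors. -/
noncomputable def dlen {p : ℕ} [NeZero p] (D : SpinalData p) (hp1 : 1 < p)
    (g : Equiv.Perm (Vtx p)) : ℕ :=
  sInf {N | lenWitness D hp1 g N}

/-!
Map the free group on the letters `a, b^{(j)}_i` onto `G` and onto `(ℤ/p)^{1+∑ r_j}`. The heart
of the proof is that in every positive word representing `1` in `G` each letter occurs a multiple
of `p` times. For `a` this is read off from the action at the root. For the directed letters,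
induct on their number: the sections of the word at the first-level vertices again represent `1`
and together contain every directed letter exactly once. If some section keeps all of them, pass
to it: it consists of directed letters only, and if again one of its sections keeps all of them,
they all belong to one family `j`. The other sections are then powers of `a` with exponents
`∑ᵢ cᵢ e^{(j)}_{i,k}` (`cᵢ` the number of `b^{(j)}_i`), so linear independence forces `p ∣ cᵢ`.
Hence exponent sums define `φ` on `G`. Its kernel is `G'` since `G^{ab}`, generated by elements
of order dividing `p`, is a quotient of `(ℤ/p)^{1+∑ r_j}` through `φ`.
-/

section ElementaryAbelianQuotient

noncomputable def abelianizationEquivOfSurjective {G H : Type*} [Group G] [Group H] (φ : G →* H)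
    (hφ : Function.Surjective φ) (hker : φ.ker = commutator G) : Abelianization G ≃* H :=
  (QuotientGroup.quotientMulEquivOfEq hker.symm).trans
    (QuotientGroup.quotientKerEquivOfSurjective φ hφ)

theorem ofAdd_pow_char (p : ℕ) {A : Type*} [AddCommGroup A] [Module (ZMod p) A] (a : A) :
    Multiplicative.ofAdd a ^ p = 1 := by
  rw [← ofAdd_nsmul, ← Nat.cast_smul_eq_nsmul (ZMod p), ZMod.natCast_self, zero_smul,
    ofAdd_zero]

variable {L : Type*} [DecidableEq L] (p : ℕ) [NeZero p]

def piZModChar [Fintype L] {Q : Type*} [CommMonoid Q] (q : L → Q) (hq : ∀ u, q u ^ p = 1) :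
    AddChar (L → ZMod p) Q :=
  ∏ u, (AddChar.zmodChar p (hq u)).compAddMonoidHom (Pi.evalAddMonoidHom (fun _ => ZMod p) u)

theorem piZModChar_single [Fintype L] {Q : Type*} [CommMonoid Q] (q : L → Q)
    (hq : ∀ u, q u ^ p = 1) (v : L) : piZModChar p q hq (Pi.single v 1) = q v := by
  rw [piZModChar, AddChar.prod_apply, Finset.prod_eq_single v]
  · simpa using AddChar.zmodChar_apply' (hq v) 1
  · intro u _ hu
    simp [hu]
  · simp

theorem exists_list_lift_eq_prod_map {G : Type*} [Group G] (gen : L → G)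
    (hpow : ∀ u, gen u ^ p = 1) (w : FreeGroup L) :
    ∃ l : List L, FreeGroup.lift gen w = (l.map gen).prod ∧
      FreeGroup.lift (fun u => Multiplicative.ofAdd (Pi.single u (1 : ZMod p))) w =
        Multiplicative.ofAdd (fun u => (l.count u : ZMod p)) := by
  induction w using FreeGroup.induction_on with
  | C1 => exact ⟨[], by simp, by simp; rfl⟩
  | of u =>
    refine ⟨[u], by simp, ?_⟩
    ext v
    by_cases h : v = u
    · simp [h]
    · simp [h, List.count_singleton, Ne.symm h]
  | inv_of u _ =>
    refine ⟨List.replicate (p - 1) u, ?_, ?_⟩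
    · rw [map_inv, FreeGroup.lift_apply_of, List.map_replicate, List.prod_replicate,
        eq_comm, ← mul_eq_one_iff_eq_inv, ← pow_succ, Nat.sub_add_cancel NeZero.one_le, hpow]
    · rw [map_inv, FreeGroup.lift_apply_of, ← ofAdd_neg]
      ext v
      by_cases h : v = u
      · simp [h, Nat.cast_sub NeZero.one_le]
      · simp [h, List.count_replicate, Ne.symm h]
  | mul w₁ w₂ ih₁ ih₂ =>
    obtain ⟨l₁, h₁, h₁'⟩ := ih₁
    obtain ⟨l₂, h₂, h₂'⟩ := ih₂
    refine ⟨l₁ ++ l₂, by simp [h₁, h₂], ?_⟩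
    rw [map_mul, h₁', h₂', ← ofAdd_add]
    congr 1
    ext u
    simp

theorem surjective_of_ofAdd_single_mem_range [Fintype L] {G : Type*} [Group G]
    (φ : G →* Multiplicative (L → ZMod p))
    (h : ∀ u, Multiplicative.ofAdd (Pi.single u 1) ∈ φ.range) : Function.Surjective φ := by
  intro f
  rw [← MonoidHom.mem_range, ← ofAdd_toAdd f,
    ← Finset.univ_sum_single (Multiplicative.toAdd f), ofAdd_sum]
  refine Subgroup.prod_mem _ fun u _ => ?_
  convert Subgroup.pow_mem _ (h u) (Multiplicative.toAdd f u).val using 1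
  rw [← ofAdd_nsmul, ← Pi.single_smul]
  simp

theorem exists_surjective_ker_eq_commutator [Fintype L] {G : Type*} [Group G] (gen : L → G)
    (hgen : Subgroup.closure (Set.range gen) = ⊤) (hpow : ∀ u, gen u ^ p = 1)
    (hrel : ∀ l : List L, (l.map gen).prod = 1 → ∀ u, p ∣ l.count u) :
    ∃ φ : G →* Multiplicative (L → ZMod p), Function.Surjective φ ∧
      (∀ u, φ (gen u) = Multiplicative.ofAdd (Pi.single u 1)) ∧ φ.ker = commutator G := by
  set π : FreeGroup L →* G := FreeGroup.lift gen
  set ψ : FreeGroup L →* Multiplicative (L → ZMod p) :=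
    FreeGroup.lift fun u => Multiplicative.ofAdd (Pi.single u (1 : ZMod p))
  have hπ : Function.Surjective π := FreeGroup.lift_surjective_iff_closure_range_eq_top.mpr hgen
  have hker : π.ker ≤ ψ.ker := by
    intro w hw
    obtain ⟨l, hπl, hψl⟩ := exists_list_lift_eq_prod_map p gen hpow w
    have hl := hrel l (hπl ▸ hw)
    rw [MonoidHom.mem_ker, hψl, ← ofAdd_zero]
    exact congrArg _ (funext fun u => (ZMod.natCast_eq_zero_iff _ p).mpr (hl u))
  set φ := π.liftOfRightInverse _ (Function.rightInverse_surjInv hπ) ⟨ψ, hker⟩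
  have hφπ : ∀ w, φ (π w) = ψ w := π.liftOfRightInverse_comp_apply _ _ ⟨ψ, hker⟩
  have hφgen : ∀ u, φ (gen u) = Multiplicative.ofAdd (Pi.single u 1) := fun u => by
    simpa [ψ, π] using hφπ (FreeGroup.of u)
  -- `G^{ab}` is generated by elements of order dividing `p`, so `Abelianization.of` factors
  -- through `φ`.
  set χ := (piZModChar p (fun u => Abelianization.of (gen u))
    fun u => by rw [← map_pow, hpow, map_one]).toMonoidHom
  have hχφ : ∀ g, χ (φ g) = Abelianization.of g := by
    suffices (χ.comp φ).comp π = Abelianization.of.comp π from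
      fun g => by obtain ⟨w, rfl⟩ := hπ g; exact DFunLike.congr_fun this w
    refine FreeGroup.ext_hom _ _ fun u => ?_
    simp [π, χ, hφgen, piZModChar_single]
  refine ⟨φ, surjective_of_ofAdd_single_mem_range p φ fun u => ⟨gen u, hφgen u⟩, hφgen,
    le_antisymm (fun g hg => ?_) (Abelianization.commutator_subset_ker φ)⟩
  rw [← Abelianization.ker_of, MonoidHom.mem_ker, ← hχφ, hg, map_one]

end ElementaryAbelianQuotient

open Fin.NatCast

section TreeAction

variable {p : ℕ}

theorem applyP_one (ω : Vtx p) : applyP (fun _ => 1) ω = ω := by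
  induction ω with
  | nil => rfl
  | cons x ω ih => exact congrArg (x :: ·) ih

theorem toPerm_nil (f : Vtx p → Equiv.Perm (Fin p)) : toPerm f [] = [] := rfl

theorem pow_apply_cons_of_apply_cons {g h : Equiv.Perm (Vtx p)} {x : Fin p}
    (hg : ∀ τ, g (x :: τ) = x :: h τ) (n : ℕ) (τ : Vtx p) :
    (g ^ n) (x :: τ) = x :: (h ^ n) τ := by
  induction n with
  | zero => rfl
  | succ n ih => rw [pow_succ', Equiv.Perm.mul_apply, ih, hg, pow_succ', Equiv.Perm.mul_apply]

variable [NeZero p]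

theorem rootCycle_pow_apply (n : ℕ) (x : Fin p) : (rootCycle p ^ n) x = x + n := by
  induction n with
  | zero => simp
  | succ n ih =>
    rw [pow_succ', Equiv.Perm.mul_apply, ih, Nat.cast_succ, ← add_assoc]
    rfl

theorem aAut_cons (x : Fin p) (τ : Vtx p) : aAut p (x :: τ) = (x + 1) :: τ :=
  congrArg ((x + 1) :: ·) (applyP_one τ)

theorem aAut_pow_cons (n : ℕ) (x : Fin p) (τ : Vtx p) :
    (aAut p ^ n) (x :: τ) = (x + n) :: τ := by
  induction n with
  | zero => simp
  | succ n ih => rw [pow_succ', Equiv.Perm.mul_apply, ih, aAut_cons, Nat.cast_succ, add_assoc]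

theorem aAut_pow_self : aAut p ^ p = 1 := by
  ext1 ω
  cases ω with
  | nil => exact Equiv.Perm.pow_apply_eq_self_of_apply_eq_self (toPerm_nil _) p
  | cons x τ => simp [aAut_pow_cons]

theorem dirAut_cons_self (hp1 : 1 < p) (c : Fin p) (e : Fin (p - 1) → ZMod p) (τ : Vtx p) :
    dirAut hp1 c e (c :: τ) = c :: dirAut hp1 c e τ := by
  have : (fun σ => dirPort hp1 c e (c :: σ)) = dirPort hp1 c e := by
    funext σ
    cases σ <;> simp [dirPort]
  simp only [dirAut, toPerm, Equiv.coe_fn_mk, applyP, dirPort, Equiv.Perm.one_apply, this]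

theorem dirAut_cons_of_ne (hp1 : 1 < p) {x c : Fin p} (hx : x ≠ c) (e : Fin (p - 1) → ZMod p)
    (τ : Vtx p) :
    dirAut hp1 c e (x :: τ) = x :: (aAut p ^ (e (offIdx hp1 (x - c))).val) τ := by
  cases τ with
  | nil => exact (congrArg (x :: ·) (Equiv.Perm.pow_apply_eq_self_of_apply_eq_self
      (toPerm_nil _) _)).symm
  | cons y ω =>
    simp only [dirAut, toPerm, Equiv.coe_fn_mk, applyP, dirPort, if_neg hx, aAut_pow_cons,
      Equiv.Perm.one_apply, applyP_one, rootCycle_pow_apply]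

theorem dirAut_pow_self (hp1 : 1 < p) (c : Fin p) (e : Fin (p - 1) → ZMod p) :
    dirAut hp1 c e ^ p = 1 := by
  ext1 ω
  induction ω with
  | nil => exact Equiv.Perm.pow_apply_eq_self_of_apply_eq_self (toPerm_nil _) p
  | cons x τ ih =>
    by_cases hx : x = c
    · subst hx
      rw [pow_apply_cons_of_apply_cons (dirAut_cons_self hp1 x e), ih]
      rfl
    · rw [pow_apply_cons_of_apply_cons (dirAut_cons_of_ne hp1 hx e), ← pow_mul, mul_comm,
        pow_mul, aAut_pow_self, one_pow]
      rfl

end TreeAction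

theorem pathLetter_injective {p : ℕ} [NeZero p] : Function.Injective (pathLetter (p := p)) :=
  fun _ _ h => add_right_cancel (neg_injective h)

theorem exists_offIdx_eq {p : ℕ} [NeZero p] (hp1 : 1 < p) (c : Fin p) (k : Fin (p - 1)) :
    ∃ x : Fin p, x ≠ c ∧ offIdx hp1 (x - c) = k := by
  have hk : k.val + 1 < p := by omega
  refine ⟨c + ⟨k.val + 1, hk⟩, fun h => ?_, ?_⟩
  · simpa [Fin.ext_iff] using add_eq_left.mp h
  · simp [offIdx]

namespace SpinalData

variable {p : ℕ} (D : SpinalData p)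

/-- `none` stands for `a` and `some ⟨j, i⟩` for `b^{(j)}_i`. -/
abbrev Letter : Type := Option ((j : Fin p) × Fin (D.r j))

def letterVecEquiv :
    (D.Letter → ZMod p) ≃+ ZMod p × ((j : Fin p) → Fin (D.r j) → ZMod p) where
  toEquiv := Equiv.piOptionEquivProd.trans
    ((Equiv.refl _).prodCongr (Equiv.piCurry fun _ _ => ZMod p))
  map_add' _ _ := rfl

theorem letterVecEquiv_apply (f : D.Letter → ZMod p) :
    D.letterVecEquiv f = (f none, fun j i => f (some ⟨j, i⟩)) := rfl

theorem letterVecEquiv_single_none : D.letterVecEquiv (Pi.single none 1) = (1, 0) := by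
  ext j i <;> simp [letterVecEquiv_apply]

theorem letterVecEquiv_single_some (j : Fin p) (i : Fin (D.r j)) :
    D.letterVecEquiv (Pi.single (some ⟨j, i⟩) 1) = (0, Pi.single j (Pi.single i 1)) := by
  ext j' i'
  · simp [letterVecEquiv_apply]
  · rw [letterVecEquiv_apply]
    by_cases hj : j' = j
    · subst hj
      by_cases hi : i' = i <;> simp [hi]
    · simp [hj]

variable [NeZero p] (hp1 : 1 < p)

def letterGen : D.Letter → Equiv.Perm (Vtx p)
  | none => aAut p
  | some s => D.gen hp1 s.1 s.2

def wordVal (l : List D.Letter) : Equiv.Perm (Vtx p) :=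
  (l.map (D.letterGen hp1)).prod

def letterSection : D.Letter → Fin p → List D.Letter
  | none, _ => []
  | some s, y =>
    if y = pathLetter s.1 then [some s]
    else List.replicate (D.e s.1 s.2 (offIdx hp1 (y - pathLetter s.1))).val none

/-- Letters act from right to left, and each `a` to the right of `u` moves the vertex `x` one
step further, so `u` acts at the vertex `x + (number of a's to its right)`. -/
def wordSection (x : Fin p) : List D.Letter → List D.Letter
  | [] => []
  | u :: l => D.letterSection hp1 u (x + l.count none) ++ wordSection x l

theorem letterGen_mem_grp (u : D.Letter) : D.letterGen hp1 u ∈ D.grp hp1 := by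
  rcases u with _ | s
  · exact aAut_mem_grp D hp1
  · exact gen_mem_grp D hp1 s.1 s.2

def grpGen (u : D.Letter) : D.grp hp1 :=
  ⟨D.letterGen hp1 u, D.letterGen_mem_grp hp1 u⟩

theorem closure_range_grpGen : Subgroup.closure (Set.range (D.grpGen hp1)) = ⊤ := by
  have hrange : Set.range (D.grpGen hp1) = Subtype.val ⁻¹' D.genSet hp1 := by
    ext ⟨g, _⟩
    simp only [Set.mem_range, Set.mem_preimage, genSet, Set.mem_insert_iff]
    constructor
    · rintro ⟨_ | ⟨j, i⟩, h⟩ <;> cases h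
      · exact Or.inl rfl
      · exact Or.inr ⟨j, i, rfl⟩
    · rintro (rfl | ⟨j, i, rfl⟩)
      · exact ⟨none, rfl⟩
      · exact ⟨some ⟨j, i⟩, rfl⟩
  rw [hrange]
  exact Subgroup.closure_closure_coe_preimage

theorem grpGen_pow_self (u : D.Letter) : D.grpGen hp1 u ^ p = 1 := by
  rcases u with _ | s
  · exact Subtype.ext aAut_pow_self
  · exact Subtype.ext (dirAut_pow_self hp1 _ _)

theorem coe_prod_map_grpGen (l : List D.Letter) :
    ((l.map (D.grpGen hp1)).prod : Equiv.Perm (Vtx p)) = D.wordVal hp1 l := by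
  rw [Subgroup.val_list_prod, List.map_map]
  rfl

variable {D hp1}

@[simp]
theorem wordVal_nil : D.wordVal hp1 [] = 1 := rfl

@[simp]
theorem wordVal_cons (u : D.Letter) (l : List D.Letter) :
    D.wordVal hp1 (u :: l) = D.letterGen hp1 u * D.wordVal hp1 l := List.prod_cons

@[simp]
theorem wordVal_append (l₁ l₂ : List D.Letter) :
    D.wordVal hp1 (l₁ ++ l₂) = D.wordVal hp1 l₁ * D.wordVal hp1 l₂ := by
  simp [wordVal]

@[simp]
theorem wordVal_replicate_none (n : ℕ) :
    D.wordVal hp1 (List.replicate n none) = aAut p ^ n := by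
  simp [wordVal, letterGen]

theorem letterGen_apply_cons (u : D.Letter) (y : Fin p) (τ : Vtx p) :
    D.letterGen hp1 u (y :: τ) =
      (y + [u].count none) :: D.wordVal hp1 (D.letterSection hp1 u y) τ := by
  rcases u with _ | s
  · simp [letterGen, letterSection, aAut_cons]
  · by_cases hy : y = pathLetter s.1
    · subst hy
      simp [letterGen, letterSection, gen, dirAut_cons_self]
    · simp [letterGen, letterSection, gen, hy, dirAut_cons_of_ne hp1 hy]

theorem wordVal_apply_cons (l : List D.Letter) (x : Fin p) (τ : Vtx p) :
    D.wordVal hp1 l (x :: τ) =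
      (x + l.count none) :: D.wordVal hp1 (D.wordSection hp1 x l) τ := by
  induction l with
  | nil => simp [wordSection]
  | cons u l ih =>
    rw [wordVal_cons, Equiv.Perm.mul_apply, ih, letterGen_apply_cons, wordSection, wordVal_append,
      Equiv.Perm.mul_apply, add_assoc, ← Nat.cast_add, List.count_cons, List.count_cons,
      List.count_nil, zero_add]

theorem dvd_count_none_of_wordVal_eq_one {l : List D.Letter} (h : D.wordVal hp1 l = 1) :
    p ∣ l.count none := by
  have := wordVal_apply_cons (hp1 := hp1) l 0 []
  rw [h, Equiv.Perm.one_apply, List.cons.injEq, zero_add, eq_comm, Fin.natCast_eq_zero] at this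
  exact this.1

theorem wordVal_wordSection_eq_one {l : List D.Letter} (h : D.wordVal hp1 l = 1) (x : Fin p) :
    D.wordVal hp1 (D.wordSection hp1 x l) = 1 := by
  ext1 τ
  have := wordVal_apply_cons (hp1 := hp1) l x τ
  rw [h, Equiv.Perm.one_apply, List.cons.injEq] at this
  exact this.2.symm

theorem sum_countP_letterSection {q : D.Letter → Bool} (hq : q none = false) (u : D.Letter) :
    ∑ y, (D.letterSection hp1 u y).countP q = [u].countP q := by
  rcases u with _ | s
  · simp [letterSection, hq]
  · simp [letterSection, apply_ite, List.countP_replicate, hq]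

theorem sum_countP_wordSection {q : D.Letter → Bool} (hq : q none = false) (l : List D.Letter) :
    ∑ x, (D.wordSection hp1 x l).countP q = l.countP q := by
  induction l with
  | nil => simp [wordSection]
  | cons u l ih =>
    simp only [wordSection, List.countP_append, Finset.sum_add_distrib, ih]
    have hshift := Equiv.sum_comp (Equiv.addRight (l.count none : Fin p))
      fun y => (D.letterSection hp1 u y).countP q
    simp only [Equiv.coe_addRight] at hshift
    rw [hshift, sum_countP_letterSection hq, ← List.countP_append]
    rfl

theorem countP_isSome_wordSection_le (x : Fin p) (l : List D.Letter) :
    (D.wordSection hp1 x l).countP Option.isSome ≤ l.countP Option.isSome :=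
  sum_countP_wordSection (hp1 := hp1) (q := Option.isSome) rfl l ▸
    Finset.single_le_sum (f := fun y => (D.wordSection hp1 y l).countP Option.isSome)
      (fun _ _ => Nat.zero_le _) (Finset.mem_univ x)

theorem dvd_count_of_forall_dvd_count_wordSection {l : List D.Letter}
    {s : (j : Fin p) × Fin (D.r j)}
    (h : ∀ x, p ∣ (D.wordSection hp1 x l).count (some s)) : p ∣ l.count (some s) := by
  rw [List.count, ← sum_countP_wordSection (hp1 := hp1) (by rfl) l]
  exact Finset.dvd_sum fun x _ => h x

theorem wordSection_eq_filter_of_countP_eq {x : Fin p} {l : List D.Letter}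
    (h : (D.wordSection hp1 x l).countP Option.isSome = l.countP Option.isSome) :
    D.wordSection hp1 x l = l.filter Option.isSome := by
  induction l with
  | nil => rfl
  | cons u l ih =>
    have hle := countP_isSome_wordSection_le (hp1 := hp1) x l
    rcases u with _ | s
    · simp [wordSection, letterSection] at h ⊢
      exact ih h
    · simp only [wordSection, letterSection] at h ⊢
      split_ifs at h ⊢ with hy
      · simp at h ⊢
        exact ih h
      · simp [List.countP_replicate] at h
        omega

theorem wordSection_of_none_not_mem {l : List D.Letter} (hl : none ∉ l) (x : Fin p) :
    D.wordSection hp1 x l = l.flatMap (D.letterSection hp1 · x) := by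
  induction l with
  | nil => rfl
  | cons u l ih =>
    rw [List.mem_cons, not_or] at hl
    rw [wordSection, List.count_eq_zero_of_not_mem hl.2, Nat.cast_zero, add_zero, ih hl.2,
      List.flatMap_cons]

theorem pathLetter_eq_of_countP_wordSection_eq {x : Fin p} {l : List D.Letter} (hl : none ∉ l)
    (h : (D.wordSection hp1 x l).countP Option.isSome = l.countP Option.isSome)
    {s : (j : Fin p) × Fin (D.r j)} (hs : some s ∈ l) : pathLetter s.1 = x := by
  induction l with
  | nil => simp at hs
  | cons u l ih =>
    rw [List.mem_cons, not_or] at hl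
    obtain ⟨t, rfl⟩ := Option.ne_none_iff_exists'.mp (Ne.symm hl.1)
    have hle := countP_isSome_wordSection_le (hp1 := hp1) x l
    rw [wordSection, List.count_eq_zero_of_not_mem hl.2, Nat.cast_zero, add_zero] at h
    simp only [letterSection, List.countP_append] at h
    split_ifs at h with hx
    · rcases List.mem_cons.mp hs with hst | hsl
      · rw [Option.some_injective _ hst, hx]
      · simp at h
        exact ih hl.2 (by omega) hsl
    · simp [List.countP_replicate] at h
      omega

theorem sum_count_smul_eq_zero_of_wordVal_eq_one (j : Fin p) {m : List (Fin (D.r j))}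
    (h : D.wordVal hp1 (m.map fun i => some ⟨j, i⟩) = 1) :
    ∑ i, (m.count i : ZMod p) • D.e j i = 0 := by
  ext k
  obtain ⟨x, hx, hxk⟩ := exists_offIdx_eq hp1 (pathLetter j) k
  have hdvd := dvd_count_none_of_wordVal_eq_one (wordVal_wordSection_eq_one h x)
  rw [wordSection_of_none_not_mem (by simp), List.flatMap_map] at hdvd
  simp only [letterSection, if_neg hx, hxk, List.count_flatMap] at hdvd
  rw [← ZMod.natCast_eq_zero_iff] at hdvd
  calc (∑ i, (m.count i : ZMod p) • D.e j i) k = ∑ i, m.count i • D.e j i k := by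
        simp [Finset.sum_apply]
    _ = ∑ i ∈ m.toFinset, m.count i • D.e j i k :=
        (Finset.sum_subset (Finset.subset_univ _) fun i _ hi => by
          simp [List.count_eq_zero_of_not_mem (by simpa using hi)]).symm
    _ = (m.map fun i => D.e j i k).sum := (Finset.sum_list_map_count _ _).symm
    _ = 0 := by simpa [Function.comp_def, Nat.cast_list_sum] using hdvd

theorem dvd_count_of_wordVal_map_eq_one (j : Fin p) {m : List (Fin (D.r j))}
    (h : D.wordVal hp1 (m.map fun i => some ⟨j, i⟩) = 1) (i : Fin (D.r j)) : p ∣ m.count i :=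
  (ZMod.natCast_eq_zero_iff _ p).mp <| Fintype.linearIndependent_iff.mp (D.indep j) _
    (sum_count_smul_eq_zero_of_wordVal_eq_one j h) i

theorem dvd_count_of_countP_wordSection_eq {l : List D.Letter} (hl : none ∉ l)
    (h : D.wordVal hp1 l = 1) {x : Fin p}
    (hx : (D.wordSection hp1 x l).countP Option.isSome = l.countP Option.isSome)
    (s : (j : Fin p) × Fin (D.r j)) : p ∣ l.count (some s) := by
  have hpath := fun t => pathLetter_eq_of_countP_wordSection_eq hl hx (s := t)
  obtain ⟨j, rfl⟩ := (Finite.surjective_of_injective pathLetter_injective) x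
  obtain ⟨m, rfl⟩ : l ∈ Set.range (List.map fun i => some ⟨j, i⟩) := by
    rw [Set.range_list_map]
    rintro (_ | ⟨j', i⟩) hu
    · exact absurd hu hl
    · obtain rfl := pathLetter_injective (hpath _ hu)
      exact ⟨i, rfl⟩
  obtain ⟨j', i⟩ := s
  by_cases hj : j' = j
  · subst hj
    have hinj : Function.Injective fun i : Fin (D.r j') => (some ⟨j', i⟩ : D.Letter) :=
      fun _ _ h => by simpa using h
    rw [List.count_map_of_injective m _ hinj i]
    exact dvd_count_of_wordVal_map_eq_one j' h i
  · rw [List.count_eq_zero_of_not_mem fun hmem => hj (pathLetter_injective (hpath _ hmem))]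
    exact dvd_zero p

theorem dvd_count_of_wordVal_eq_one {l : List D.Letter} (h : D.wordVal hp1 l = 1)
    (u : D.Letter) : p ∣ l.count u := by
  obtain _ | s := u
  · exact dvd_count_none_of_wordVal_eq_one h
  induction hn : l.countP Option.isSome using Nat.strong_induction_on generalizing l with
  | _ n ih =>
  have hsections : ∀ l' : List D.Letter, D.wordVal hp1 l' = 1 →
      (∀ x, (D.wordSection hp1 x l').countP Option.isSome < n) → p ∣ l'.count (some s) :=
    fun l' h' hlt => dvd_count_of_forall_dvd_count_wordSection fun x =>
      ih _ (hlt x) (wordVal_wordSection_eq_one h' x) rfl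
  by_cases hlt : ∀ x, (D.wordSection hp1 x l).countP Option.isSome < n
  · exact hsections l h hlt
  obtain ⟨x₀, hx₀⟩ := not_forall.mp hlt
  have hx₀ : (D.wordSection hp1 x₀ l).countP Option.isSome = l.countP Option.isSome :=
    le_antisymm (countP_isSome_wordSection_le x₀ l) (hn ▸ not_lt.mp hx₀)
  have hfilter := wordSection_eq_filter_of_countP_eq hx₀
  have h' : D.wordVal hp1 (l.filter Option.isSome) = 1 :=
    hfilter ▸ wordVal_wordSection_eq_one h x₀
  have hn' : (l.filter Option.isSome).countP Option.isSome = n := by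
    rw [← hfilter, hx₀, hn]
  rw [← List.count_filter (p := Option.isSome) rfl]
  by_cases hlt' : ∀ x, (D.wordSection hp1 x (l.filter Option.isSome)).countP Option.isSome < n
  · exact hsections _ h' hlt'
  obtain ⟨x₁, hx₁⟩ := not_forall.mp hlt'
  exact dvd_count_of_countP_wordSection_eq (by simp) h' (x := x₁)
    (le_antisymm (countP_isSome_wordSection_le x₁ _) (hn' ▸ not_lt.mp hx₁)) s

end SpinalData

theorem stmt5_general (p : ℕ) (hp : p.Prime) [NeZero p]
    (D : SpinalData p) :
    Nat.card (Abelianization ↥(D.grp hp.one_lt)) = p ^ (1 + ∑ j, D.r j) ∧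
    (∀ x : Abelianization ↥(D.grp hp.one_lt), x ^ p = 1) ∧
    ∃ φ : ↥(D.grp hp.one_lt) →*
        Multiplicative (ZMod p × ((j : Fin p) → Fin (D.r j) → ZMod p)),
      Function.Surjective φ ∧
      φ ⟨aAut p, aAut_mem_grp D hp.one_lt⟩ = Multiplicative.ofAdd (1, 0) ∧
      (∀ (j : Fin p) (i : Fin (D.r j)),
        φ ⟨D.gen hp.one_lt j i, gen_mem_grp D hp.one_lt j i⟩ =
          Multiplicative.ofAdd (0, Pi.single j (Pi.single i (1 : ZMod p)))) ∧
      φ.ker = commutator ↥(D.grp hp.one_lt) := by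
  obtain ⟨φ, hsurj, hgen, hker⟩ := exists_surjective_ker_eq_commutator p (D.grpGen hp.one_lt)
    (D.closure_range_grpGen _) (D.grpGen_pow_self _) fun l hl u => by
      -- `convert` identifies the `BEq` instance on letters derived from `DecidableEq` with
      -- `Option`'s own.
      convert SpinalData.dvd_count_of_wordVal_eq_one (hp1 := hp.one_lt)
        (by rw [← D.coe_prod_map_grpGen, hl]; rfl) u
  set e := D.letterVecEquiv.toMultiplicative
  have hsurj' : Function.Surjective (e.toMonoidHom.comp φ) := e.surjective.comp hsurj
  have hker' : (e.toMonoidHom.comp φ).ker = commutator _ :=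
    (MonoidHom.ker_comp_of_injective _ _ e.injective).trans hker
  set hab := abelianizationEquivOfSurjective _ hsurj' hker'
  refine ⟨?_, fun x => hab.injective ?_, e.toMonoidHom.comp φ, hsurj', ?_, fun j i => ?_,
    hker'⟩
  · rw [Nat.card_congr hab.toEquiv]
    simp [Finset.prod_pow_eq_pow_sum, pow_add]
  · rw [map_pow, map_one, ← ofAdd_toAdd (hab x), ofAdd_pow_char]
  · show e (φ (D.grpGen _ none)) = _
    simp [hgen, e, D.letterVecEquiv_single_none]
  · show e (φ (D.grpGen _ (some ⟨j, i⟩))) = _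
    simp [hgen, e, D.letterVecEquiv_single_some]

theorem stmt5 (p : ℕ) (hp : p.Prime) (hodd : Odd p) [NeZero p]
    (D : SpinalData p) :
    Nat.card (Abelianization ↥(D.grp hp.one_lt)) = p ^ (1 + ∑ j, D.r j) ∧
    (∀ x : Abelianization ↥(D.grp hp.one_lt), x ^ p = 1) ∧
    ∃ φ : ↥(D.grp hp.one_lt) →*
        Multiplicative (ZMod p × ((j : Fin p) → Fin (D.r j) → ZMod p)),
      Function.Surjective φ ∧
      φ ⟨aAut p, aAut_mem_grp D hp.one_lt⟩ = Multiplicative.ofAdd (1, 0) ∧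
      (∀ (j : Fin p) (i : Fin (D.r j)),
        φ ⟨D.gen hp.one_lt j i, gen_mem_grp D hp.one_lt j i⟩ =
          Multiplicative.ofAdd (0, Pi.single j (Pi.single i (1 : ZMod p)))) ∧
      φ.ker = commutator ↥(D.grp hp.one_lt) :=
  stmt5_general p hp D

end GMS
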